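/- Let U = [u₁,...,u_K] ∈ ℝ^{P×K} and V = [v₁,...,v_K] ∈ ℝ^{Q×K} be in block-n TT format and A in matrix TT format, with slice matrices U^{(m)}_{i_m}, A^{(m)}_{i_m,j_m}, V^{(m)}_{j_m} for m ≠ n. Define Z^{(m)} = Σ_{i_m,j_m} U^{(m)}_{i_m} ⊗ A^{(m)}_{i_m,j_m} ⊗ V^{(m)}_{j_m}. Then the (k₁,k₂) entry of UᵀAV equals Z^{(1)} ⋯ Z^{(n-1)} (Σ_{i_n,j_n} U^{(n)}_{k₁,i_n} ⊗ A^{(n)}_{i_n,j_n} ⊗ V^{(n)}_{k₂,j_n}) Z^{(n+1)} ⋯ Z^{(N)}. -/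

import Mathlib

/-!
Both sides are the same multilinear expansion. By the mixed-product property, a chain product of
Kronecker products is the Kronecker product of the chain products, and the sum of all entries of a
Kronecker product is the product of the entry sums. Expanding the chain product of the sums
`Z⁽ᵐ⁾ = ∑_{iₘ, jₘ} U⁽ᵐ⁾ ⊗ A⁽ᵐ⁾ ⊗ V⁽ᵐ⁾` over all index tuples `(i, j)` therefore gives the left side.
-/

open Matrix

noncomputable def chainProd (T : ℕ → Type) [∀ n, Fintype (T n)] [DecidableEq (T 0)]
    (M : ∀ n, Matrix (T n) (T (n + 1)) ℝ) : (k : ℕ) → Matrix (T 0) (T k) ℝ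
  | 0 => 1
  | k + 1 => chainProd T M k * M k

/-- The unique entry of a 1×1 matrix, obtained as the sum of all entries. -/
noncomputable def matEntry {α β : Type} [Fintype α] [Fintype β]
    (M : Matrix α β ℝ) : ℝ := ∑ a, ∑ b, M a b

open scoped Kronecker

section MatEntry

variable {α β γ δ ι : Type} [Fintype α] [Fintype β] [Fintype γ] [Fintype δ] [Fintype ι]

theorem matEntry_sum (M : ι → Matrix α β ℝ) :
    matEntry (∑ s, M s : Matrix α β ℝ) = ∑ s, matEntry (M s) := by
  simp only [matEntry, Matrix.sum_apply]
  exact (Finset.sum_congr rfl fun _ _ => Finset.sum_comm).trans Finset.sum_comm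

theorem matEntry_kronecker (A : Matrix α β ℝ) (B : Matrix γ δ ℝ) :
    matEntry (A ⊗ₖ B) = matEntry A * matEntry B := by
  simp only [matEntry, Fintype.sum_prod_type, kronecker_apply, Finset.sum_mul_sum]

end MatEntry

section ChainProd

variable {T : ℕ → Type} [∀ n, Fintype (T n)] [DecidableEq (T 0)]

theorem chainProd_succ (M : ∀ n, Matrix (T n) (T (n + 1)) ℝ) (k : ℕ) :
    chainProd T M (k + 1) = chainProd T M k * M k := rfl

theorem chainProd_congr {M M' : ∀ n, Matrix (T n) (T (n + 1)) ℝ} {k : ℕ}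
    (h : ∀ m < k, M m = M' m) : chainProd T M k = chainProd T M' k := by
  induction k with
  | zero => rfl
  | succ k ih =>
    rw [chainProd_succ, chainProd_succ, ih fun m hm => h m (Nat.lt_succ_of_lt hm),
      h k k.lt_succ_self]

theorem chainProd_kronecker {T' : ℕ → Type} [∀ n, Fintype (T' n)] [DecidableEq (T' 0)]
    (M : ∀ n, Matrix (T n) (T (n + 1)) ℝ) (M' : ∀ n, Matrix (T' n) (T' (n + 1)) ℝ) (k : ℕ) :
    chainProd (fun n => T n × T' n) (fun n => M n ⊗ₖ M' n) k
      = chainProd T M k ⊗ₖ chainProd T' M' k := by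
  induction k with
  | zero => exact one_kronecker_one.symm
  | succ k ih => rw [chainProd_succ, chainProd_succ, chainProd_succ, ih, mul_kronecker_mul]

theorem chainProd_snoc {S : ℕ → Type} (M : ∀ n, S n → Matrix (T n) (T (n + 1)) ℝ) {k : ℕ}
    (s : ∀ m : Fin k, S m) (t : S k) :
    chainProd T (fun m => if h : m < k + 1 then
        M m (Fin.snoc (α := fun i : Fin (k + 1) => S i) s t ⟨m, h⟩) else 0) (k + 1)
      = chainProd T (fun m => if h : m < k then M m (s ⟨m, h⟩) else 0) k * M k t := by
  rw [chainProd_succ, dif_pos k.lt_succ_self]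
  congr 1
  · refine chainProd_congr fun m hm => ?_
    rw [dif_pos (Nat.lt_succ_of_lt hm), dif_pos hm]
    exact congrArg (M m) (Fin.snoc_castSucc (i := ⟨m, hm⟩) ..)
  · exact congrArg (M k) (Fin.snoc_last (α := fun i : Fin (k + 1) => S i) ..)

theorem chainProd_sum {S : ℕ → Type} [∀ n, Fintype (S n)]
    (M : ∀ n, S n → Matrix (T n) (T (n + 1)) ℝ) (k : ℕ) :
    chainProd T (fun m => ∑ s, M m s) k
      = ∑ s : ∀ m : Fin k, S m,
          chainProd T (fun m => if h : m < k then M m (s ⟨m, h⟩) else 0) k := by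
  induction k with
  | zero => simp [chainProd]
  | succ k ih =>
    rw [chainProd_succ, ih, Matrix.sum_mul,
      ← (Fin.snocEquiv fun i : Fin (k + 1) => S i).sum_comp, Fintype.sum_prod_type, Finset.sum_comm]
    refine Finset.sum_congr rfl fun s _ => ?_
    rw [Matrix.mul_sum]
    exact Finset.sum_congr rfl fun t _ => (chainProd_snoc M s t).symm

end ChainProd

theorem stmt_16_general (N : ℕ) (K : ℕ)
    (I J RU RA RV : ℕ → ℕ)
    (UC : ∀ m, Fin K → Fin (I m) → Matrix (Fin (RU m)) (Fin (RU (m + 1))) ℝ)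
    (AC : ∀ m, Fin (I m) → Fin (J m) → Matrix (Fin (RA m)) (Fin (RA (m + 1))) ℝ)
    (VC : ∀ m, Fin K → Fin (J m) → Matrix (Fin (RV m)) (Fin (RV (m + 1))) ℝ)
    (k1 k2 : Fin K) :
    (∑ i : ∀ m : Fin N, Fin (I m), ∑ j : ∀ m : Fin N, Fin (J m),
        matEntry (chainProd (fun m => Fin (RU m))
            (fun m => if h : m < N then UC m k1 (i ⟨m, h⟩) else 0) N)
          * matEntry (chainProd (fun m => Fin (RA m))
              (fun m => if h : m < N then AC m (i ⟨m, h⟩) (j ⟨m, h⟩) else 0) N)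
          * matEntry (chainProd (fun m => Fin (RV m))
              (fun m => if h : m < N then VC m k2 (j ⟨m, h⟩) else 0) N))
      = matEntry (chainProd (fun m => Fin (RU m) × Fin (RA m) × Fin (RV m))
          (fun m => if h : m < N then
              Matrix.of (fun p q =>
                ∑ im : Fin (I m), ∑ jm : Fin (J m),
                  UC m k1 im p.1 q.1 * AC m im jm p.2.1 q.2.1
                    * VC m k2 jm p.2.2 q.2.2)
            else 0) N) := by
  let Z : ∀ m, Fin (I m) × Fin (J m) → Matrix _ _ ℝ := fun m s =>
    UC m k1 s.1 ⊗ₖ (AC m s.1 s.2 ⊗ₖ VC m k2 s.2)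
  have hZ_sum : ∀ m < N, (if h : m < N then Matrix.of (fun p q =>
      ∑ im : Fin (I m), ∑ jm : Fin (J m),
        UC m k1 im p.1 q.1 * AC m im jm p.2.1 q.2.1 * VC m k2 jm p.2.2 q.2.2) else 0)
      = ∑ s, Z m s := by
    intro m hm
    ext p q
    simp [hm, Z, Fintype.sum_prod_type, Matrix.sum_apply, mul_assoc]
  have hZ_kronecker : ∀ s : ∀ m : Fin N, Fin (I m) × Fin (J m),
      (fun m => if h : m < N then Z m (s ⟨m, h⟩) else 0)
        = fun m => (if h : m < N then UC m k1 (s ⟨m, h⟩).1 else 0)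
          ⊗ₖ ((if h : m < N then AC m (s ⟨m, h⟩).1 (s ⟨m, h⟩).2 else 0)
            ⊗ₖ (if h : m < N then VC m k2 (s ⟨m, h⟩).2 else 0)) := by
    intro s
    funext m
    split_ifs <;> simp [Z]
  rw [chainProd_congr hZ_sum, chainProd_sum, matEntry_sum,
    ← (Equiv.arrowProdEquivProdArrow _ _ _).symm.sum_comp, Fintype.sum_prod_type]
  refine Finset.sum_congr rfl fun i _ => Finset.sum_congr rfl fun j _ => ?_
  rw [hZ_kronecker, chainProd_kronecker, chainProd_kronecker, matEntry_kronecker, matEntry_kronecker,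
    mul_assoc]
  rfl

/-- For U, V in block-n TT format (the K-mode carried by the n-th core; the
other cores do not depend on k) and A in matrix TT format, the (k₁,k₂) entry of
UᵀAV equals the chain product Z^{(1)} ⋯ Z^{(n-1)} Z_K^{(n)} Z^{(n+1)} ⋯ Z^{(N)}
of the Kronecker-structured matrices
Z^{(m)} = Σ_{i_m,j_m} U^{(m)}_{i_m} ⊗ A^{(m)}_{i_m,j_m} ⊗ V^{(m)}_{j_m}. -/
theorem stmt_16 (N n : ℕ) (hn : n < N) (K : ℕ)
    (I J RU RA RV : ℕ → ℕ)
    (hRU0 : RU 0 = 1) (hRUN : RU N = 1)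
    (hRA0 : RA 0 = 1) (hRAN : RA N = 1)
    (hRV0 : RV 0 = 1) (hRVN : RV N = 1)
    (UC : ∀ m, Fin K → Fin (I m) → Matrix (Fin (RU m)) (Fin (RU (m + 1))) ℝ)
    (AC : ∀ m, Fin (I m) → Fin (J m) → Matrix (Fin (RA m)) (Fin (RA (m + 1))) ℝ)
    (VC : ∀ m, Fin K → Fin (J m) → Matrix (Fin (RV m)) (Fin (RV (m + 1))) ℝ)
    (hU : ∀ m, m ≠ n → ∀ k k', UC m k = UC m k')
    (hV : ∀ m, m ≠ n → ∀ k k', VC m k = VC m k')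
    (k1 k2 : Fin K) :
    (∑ i : ∀ m : Fin N, Fin (I m), ∑ j : ∀ m : Fin N, Fin (J m),
        matEntry (chainProd (fun m => Fin (RU m))
            (fun m => if h : m < N then UC m k1 (i ⟨m, h⟩) else 0) N)
          * matEntry (chainProd (fun m => Fin (RA m))
              (fun m => if h : m < N then AC m (i ⟨m, h⟩) (j ⟨m, h⟩) else 0) N)
          * matEntry (chainProd (fun m => Fin (RV m))
              (fun m => if h : m < N then VC m k2 (j ⟨m, h⟩) else 0) N))
      = matEntry (chainProd (fun m => Fin (RU m) × Fin (RA m) × Fin (RV m))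
          (fun m => if h : m < N then
              Matrix.of (fun p q =>
                ∑ im : Fin (I m), ∑ jm : Fin (J m),
                  UC m k1 im p.1 q.1 * AC m im jm p.2.1 q.2.1
                    * VC m k2 jm p.2.2 q.2.2)
            else 0) N) :=
  stmt_16_general N K I J RU RA RV UC AC VC k1 k2
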